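/- arXiv:0903.2278 — 3 statements merged into one kernel-verified Lean document; each statement's English description precedes it below -/
import Mathlib

section
/- Let S be a finite set of states, and suppose to each state x we assign a weight w_x = ∏_i (β_i χ_i / ρ_i)^{x_i} > 0, where x_i ∈ ℕ is the money of agent i in state x and β_i, χ_i, ρ_i > 0. Suppose the transition matrix S satisfies: for any two states x, y that differ only in that agent i has one more dollar in x and agent j has one more dollar in y, there is p ≥ 0 with S_{xy} = ρ_i β_j χ_j p and S_{yx} = ρ_j β_i χ_i p, and S_{xy} = S_{yx} = 0 for non-adjacent distinct states. Then π_x = w_x / (∑_y w_y) satisfies detailed balance π_x S_{xy} = π_y S_{yx} for all x, y, and hence π is a stationary distribution of the chain. -/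
/-!
A transition `x → y` moves one dollar from agent `i` to agent `j`, so the product weights
satisfy `w x * c j = w y * c i` with `c = βχ/ρ`. Substituting the prescribed rates
`S x y = ρ i β j χ j p`, `S y x = ρ j β i χ i p` makes both sides of detailed balance equal to
`w x c j ρ i ρ j p`; any other pair of distinct states has both rates zero. Summing detailed
balance over `x` and using that the rows of `S` sum to one gives stationarity.
-/

open Finset

theorem Finset.prod_pow_add_single {ι M : Type*} [Fintype ι] [DecidableEq ι] [CommMonoid M]
    (c : ι → M) (e : ι → ℕ) (k : ι) :
    ∏ l, c l ^ (e + Pi.single k 1 : ι → ℕ) l = (∏ l, c l ^ e l) * c k := by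
  simp only [Pi.add_apply, pow_add, prod_mul_distrib, Pi.single_apply, pow_ite, pow_one, pow_zero,
    prod_ite_eq', mem_univ, if_true]

theorem sum_mul_eq_of_detailed_balance {V R : Type*} [Fintype V] [CommSemiring R]
    {π : V → R} {S : V → V → R} (hdb : ∀ x y, π x * S x y = π y * S y x)
    (hrow : ∀ x, ∑ y, S x y = 1) (y : V) : ∑ x, π x * S x y = π y := by
  simp_rw [hdb _ y, ← mul_sum, hrow, mul_one]

def IsDollarMove {ι : Type*} (a b : ι → ℕ) (i j : ι) : Prop :=
  i ≠ j ∧ a i = b i + 1 ∧ b j = a j + 1 ∧ ∀ l, l ≠ i → l ≠ j → a l = b l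

namespace IsDollarMove

variable {ι : Type*} {a b : ι → ℕ} {i j : ι}

theorem symm (h : IsDollarMove a b i j) : IsDollarMove b a j i := by
  obtain ⟨hij, hi, hj, hrest⟩ := h
  exact ⟨hij.symm, hj, hi, fun l hlj hli => (hrest l hli hlj).symm⟩

theorem add_single_eq [DecidableEq ι] (h : IsDollarMove a b i j) :
    a + Pi.single j 1 = b + Pi.single i 1 := by
  obtain ⟨hij, hi, hj, hrest⟩ := h
  ext l
  by_cases hli : l = i
  · subst hli; simp [hij, hi]
  by_cases hlj : l = j
  · subst hlj; simp [hli, hj]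
  · simp [hli, hlj, hrest l hli hlj]

theorem prod_pow_mul [Fintype ι] {M : Type*} [CommMonoid M] (h : IsDollarMove a b i j)
    (c : ι → M) :
    (∏ l, c l ^ a l) * c j = (∏ l, c l ^ b l) * c i := by
  classical
  rw [← prod_pow_add_single, ← prod_pow_add_single, h.add_single_eq]

theorem weight_detailed_balance [Fintype ι] (h : IsDollarMove a b i j) (β χ ρ : ι → ℝ)
    (hρ : ∀ l, ρ l ≠ 0) (p : ℝ) :
    (∏ l, (β l * χ l / ρ l) ^ a l) * (ρ i * β j * χ j * p)
      = (∏ l, (β l * χ l / ρ l) ^ b l) * (ρ j * β i * χ i * p) := by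
  have hw := h.prod_pow_mul fun l => β l * χ l / ρ l
  have hc : ∀ l, β l * χ l = β l * χ l / ρ l * ρ l := fun l => (div_mul_cancel₀ _ (hρ l)).symm
  linear_combination (ρ i * ρ j * p) * hw + ((∏ l, (β l * χ l / ρ l) ^ a l) * ρ i * p) * hc j
    - ((∏ l, (β l * χ l / ρ l) ^ b l) * ρ j * p) * hc i

end IsDollarMove

theorem stmt_6_general {V : Type*} [Fintype V] (n : ℕ)
    (money : V → Fin n → ℕ) (β χ ρ : Fin n → ℝ)
    (hρ : ∀ i, 0 < ρ i)
    (w : V → ℝ) (hw : w = fun x => ∏ i, (β i * χ i / ρ i) ^ (money x i))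
    (Adj : V → V → Fin n → Fin n → Prop)
    (hAdj : Adj = fun x y i j => i ≠ j ∧ money x i = money y i + 1 ∧
      money y j = money x j + 1 ∧ ∀ l, l ≠ i → l ≠ j → money x l = money y l)
    (S : V → V → ℝ)
    (hSrow : ∀ x, ∑ y, S x y = 1)
    (hStrans : ∀ x y i j, Adj x y i j →
      ∃ p, 0 ≤ p ∧ S x y = ρ i * β j * χ j * p ∧ S y x = ρ j * β i * χ i * p)
    (hSzero : ∀ x y, x ≠ y → (¬ ∃ i j, Adj x y i j) → S x y = 0)
    (π : V → ℝ) (hπ : π = fun x => w x / ∑ y, w y) :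
    (∀ x y, π x * S x y = π y * S y x) ∧
    (∀ y, ∑ x, π x * S x y = π y) := by
  subst hAdj
  have hdb : ∀ x y, w x * S x y = w y * S y x := by
    intro x y
    by_cases hxy : x = y
    · rw [hxy]
    by_cases hmove : ∃ i j, IsDollarMove (money x) (money y) i j
    · obtain ⟨i, j, hij⟩ := hmove
      obtain ⟨p, -, hSxy, hSyx⟩ := hStrans x y i j hij
      rw [hw, hSxy, hSyx]
      exact hij.weight_detailed_balance β χ ρ (fun l => (hρ l).ne') p
    · have hyx : ¬ ∃ i j, IsDollarMove (money y) (money x) i j :=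
        fun ⟨i, j, h⟩ => hmove ⟨j, i, h.symm⟩
      rw [hSzero x y hxy hmove, hSzero y x (Ne.symm hxy) hyx, mul_zero, mul_zero]
  have hπdb : ∀ x y, π x * S x y = π y * S y x := fun x y => by
    simp only [hπ, div_mul_eq_mul_div, hdb x y]
  exact ⟨hπdb, sum_mul_eq_of_detailed_balance hπdb hSrow⟩

/-- States are allocations of money to `n` agents (encoded by `money : V → Fin n → ℕ` on a
finite state space `V`). Each state `x` is weighted by `w x = ∏ i, (β i χ i / ρ i)^(x i)`.
If the transition matrix `S` satisfies: whenever `x` and `y` differ only in that agent `i`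
has one more dollar in `x` and agent `j` has one more dollar in `y`, there is `p ≥ 0` with
`S x y = ρ i β j χ j p` and `S y x = ρ j β i χ i p`; and `S x y = 0` for distinct
non-adjacent states; then `π x = w x / ∑ y, w y` satisfies detailed balance
`π x * S x y = π y * S y x`, hence `π` is a stationary distribution of the chain. -/
theorem stmt_6 {V : Type*} [Fintype V] [Nonempty V] (n : ℕ)
    (money : V → Fin n → ℕ) (β χ ρ : Fin n → ℝ)
    (hβ : ∀ i, 0 < β i) (hχ : ∀ i, 0 < χ i) (hρ : ∀ i, 0 < ρ i)
    (w : V → ℝ) (hw : w = fun x => ∏ i, (β i * χ i / ρ i) ^ (money x i))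
    (Adj : V → V → Fin n → Fin n → Prop)
    (hAdj : Adj = fun x y i j => i ≠ j ∧ money x i = money y i + 1 ∧
      money y j = money x j + 1 ∧ ∀ l, l ≠ i → l ≠ j → money x l = money y l)
    (S : V → V → ℝ)
    (hSnonneg : ∀ x y, 0 ≤ S x y)
    (hSrow : ∀ x, ∑ y, S x y = 1)
    (hStrans : ∀ x y i j, Adj x y i j →
      ∃ p, 0 ≤ p ∧ S x y = ρ i * β j * χ j * p ∧ S y x = ρ j * β i * χ i * p)
    (hSzero : ∀ x y, x ≠ y → (¬ ∃ i j, Adj x y i j) → S x y = 0)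
    (π : V → ℝ) (hπ : π = fun x => w x / ∑ y, w y) :
    (∀ x y, π x * S x y = π y * S y x) ∧
    (∀ y, ∑ x, π x * S x y = π y) :=
  stmt_6_general n money β χ ρ hρ w hw Adj hAdj S hSrow hStrans hSzero π hπ
end

section
/- Let T be a finite set of types with weights ω_t > 0 and thresholds k_t ∈ ℕ, and let q be the probability distribution on pairs (t,i) with 0 ≤ i ≤ k_t defined by q^t_i = ω_t^i / (∑_{t'} ∑_{j=0}^{k_{t'}} ω_{t'}^j). Among all probability distributions d on pairs (t,i) satisfying ∑_{i=0}^{k_t} d^t_i = f_t for each t (where f_t > 0, ∑_t f_t = 1) and ∑_t ∑_i i·d^t_i = m, the relative entropy D(d||q) = ∑ d^t_i log(d^t_i/q^t_i) is minimized at the distribution d^t_i = f_t λ^i q^t_i / (∑_{j=0}^{k_t} λ^j q^t_j), for the (unique) λ > 0 making the mean-money constraint hold, provided such a λ exists. -/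
/-!
The distribution `d*` is an exponential tilt of `q`: `log (d* / q) = log f_t - log Z_t + i log λ`
is affine in the statistics that the constraints fix (the type marginal and the money `i`).
Hence every feasible `d` has the same cross term `∑ d log (d* / q)` as `d*` itself, and summing
the pointwise Gibbs inequality `x log (y / z) + (x - y) ≤ x log (x / z)` with `y = d*`
gives `D(d*‖q) ≤ D(d‖q)`.
-/

open Real Finset

theorem mul_log_div_add_sub_le {x y z : ℝ} (hx : 0 ≤ x) (hy : 0 < y) (hz : 0 < z) :
    x * log (y / z) + (x - y) ≤ x * log (x / z) := by
  rcases hx.eq_or_lt with rfl | hx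
  · simpa using hy.le
  have gibbs : x - y ≤ x * log (x / y) := by
    have h := mul_le_mul_of_nonneg_left (self_sub_one_le_mul_log (div_nonneg hx.le hy.le)) hy.le
    rwa [mul_sub, mul_one, mul_div_cancel₀ _ hy.ne', ← mul_assoc, mul_div_cancel₀ _ hy.ne'] at h
  rw [show x / z = x / y * (y / z) by field_simp, log_mul (by positivity) (by positivity)]
  linarith

theorem sum_mul_log_div_le_of_cross_eq {ι : Type*} (s : Finset ι) {q p d : ι → ℝ}
    (hq : ∀ x ∈ s, 0 < q x) (hp : ∀ x ∈ s, 0 < p x) (hd : ∀ x ∈ s, 0 ≤ d x)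
    (hmass : ∑ x ∈ s, d x = ∑ x ∈ s, p x)
    (hcross : ∑ x ∈ s, d x * log (p x / q x) = ∑ x ∈ s, p x * log (p x / q x)) :
    ∑ x ∈ s, p x * log (p x / q x) ≤ ∑ x ∈ s, d x * log (d x / q x) :=
  calc ∑ x ∈ s, p x * log (p x / q x)
      = ∑ x ∈ s, (d x * log (p x / q x) + (d x - p x)) := by
        rw [sum_add_distrib, sum_sub_distrib, hcross, hmass, sub_self, add_zero]
    _ ≤ ∑ x ∈ s, d x * log (d x / q x) :=
        sum_le_sum fun x hx => mul_log_div_add_sub_le (hd x hx) (hp x hx) (hq x hx)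

theorem sum_sum_mul_add_mul {ι : Type*} (s : Finset ι) (I : ι → Finset ℕ) (g : ι → ℕ → ℝ)
    (a : ι → ℝ) (b : ℝ) :
    ∑ t ∈ s, ∑ i ∈ I t, g t i * (a t + i * b) =
      ∑ t ∈ s, a t * ∑ i ∈ I t, g t i + b * ∑ t ∈ s, ∑ i ∈ I t, (i : ℝ) * g t i := by
  simp only [mul_sum, ← sum_add_distrib]
  exact sum_congr rfl fun t _ => sum_congr rfl fun i _ => by ring

theorem sum_mul_div_sum_self {ι : Type*} (s : Finset ι) (w : ι → ℝ) (c : ℝ)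
    (hw : ∑ j ∈ s, w j ≠ 0) : ∑ i ∈ s, c * w i / ∑ j ∈ s, w j = c := by
  rw [← sum_div, ← mul_sum, mul_div_cancel_right₀ _ hw]

theorem log_mul_pow_mul_div_div {c l q Z : ℝ} (n : ℕ) (hc : 0 < c) (hl : 0 < l) (hq : 0 < q)
    (hZ : 0 < Z) : log (c * l ^ n * q / Z / q) = log c - log Z + n * log l := by
  rw [show c * l ^ n * q / Z / q = c * l ^ n / Z by field_simp, log_div (by positivity) hZ.ne',
    log_mul hc.ne' (by positivity), log_pow]
  ring

theorem stmt_8_general {T : Type*} [Fintype T] (ω : T → ℝ) (hω : ∀ t, 0 < ω t)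
    (k : T → ℕ) (f : T → ℝ) (hf : ∀ t, 0 < f t)
    (m : ℝ) (q : T → ℕ → ℝ)
    (hq : q = fun t i => ω t ^ i / ∑ t', ∑ j ∈ Finset.range (k t' + 1), ω t' ^ j)
    (lam : ℝ) (hlam : 0 < lam)
    (dstar : T → ℕ → ℝ)
    (hdstar : dstar = fun t i =>
      f t * lam ^ i * q t i / ∑ j ∈ Finset.range (k t + 1), lam ^ j * q t j)
    (hmean : ∑ t, ∑ i ∈ Finset.range (k t + 1), (i : ℝ) * dstar t i = m)
    (d : T → ℕ → ℝ)
    (hdnonneg : ∀ t i, 0 ≤ d t i)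
    (hdf : ∀ t, ∑ i ∈ Finset.range (k t + 1), d t i = f t)
    (hdm : ∑ t, ∑ i ∈ Finset.range (k t + 1), (i : ℝ) * d t i = m) :
    ∑ t, ∑ i ∈ Finset.range (k t + 1), dstar t i * Real.log (dstar t i / q t i) ≤
    ∑ t, ∑ i ∈ Finset.range (k t + 1), d t i * Real.log (d t i / q t i) := by
  set Z : T → ℝ := fun t => ∑ j ∈ range (k t + 1), lam ^ j * q t j
  have hq_pos : ∀ t i, 0 < q t i := fun t i => hq ▸
    div_pos (pow_pos (hω t) i) (sum_pos (fun t' _ => sum_pos (fun j _ => pow_pos (hω t') j)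
      nonempty_range_add_one) ⟨t, mem_univ t⟩)
  have hZ_pos : ∀ t, 0 < Z t := fun t =>
    sum_pos (fun j _ => mul_pos (pow_pos hlam j) (hq_pos t j)) nonempty_range_add_one
  have hdstar_pos : ∀ t i, 0 < dstar t i := fun t i => by
    rw [hdstar]; have := hq_pos t i; have := hZ_pos t; have := hf t; positivity
  have hdstar_row : ∀ t, ∑ i ∈ range (k t + 1), dstar t i = f t := fun t => by
    simp only [hdstar, mul_assoc]
    exact sum_mul_div_sum_self _ _ _ (hZ_pos t).ne'
  have hlog : ∀ t i, log (dstar t i / q t i) = log (f t) - log (Z t) + i * log lam := fun t i => by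
    rw [hdstar]; exact log_mul_pow_mul_div_div i (hf t) hlam (hq_pos t i) (hZ_pos t)
  have hcross : ∑ t, ∑ i ∈ range (k t + 1), d t i * log (dstar t i / q t i) =
      ∑ t, ∑ i ∈ range (k t + 1), dstar t i * log (dstar t i / q t i) := by
    simp only [hlog, sum_sum_mul_add_mul, hdf, hdstar_row, hdm, hmean]
  simp only [sum_sigma'] at hcross ⊢
  refine sum_mul_log_div_le_of_cross_eq _ (fun _ _ => hq_pos _ _) (fun _ _ => hdstar_pos _ _)
    (fun _ _ => hdnonneg _ _) ?_ hcross
  simp only [← sum_sigma', hdf, hdstar_row]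

/-- Among probability distributions `d` on pairs `(t, i)` with `0 ≤ i ≤ k t` satisfying
`∑_{i ≤ k t} d t i = f t` for each type `t` and mean-money constraint
`∑_t ∑_i i · d t i = m`, the relative entropy `D(d‖q) = ∑ d t i log (d t i / q t i)`
relative to `q t i = ω t ^ i / (∑_{t'} ∑_{j ≤ k t'} ω t' ^ j)` is minimized at
`d* t i = f t λ^i q t i / (∑_{j ≤ k t} λ^j q t j)`, for `λ > 0` making the mean-money
constraint hold. -/
theorem stmt_8 {T : Type*} [Fintype T] (ω : T → ℝ) (hω : ∀ t, 0 < ω t)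
    (k : T → ℕ) (f : T → ℝ) (hf : ∀ t, 0 < f t) (hfsum : ∑ t, f t = 1)
    (m : ℝ) (q : T → ℕ → ℝ)
    (hq : q = fun t i => ω t ^ i / ∑ t', ∑ j ∈ Finset.range (k t' + 1), ω t' ^ j)
    (lam : ℝ) (hlam : 0 < lam)
    (dstar : T → ℕ → ℝ)
    (hdstar : dstar = fun t i =>
      f t * lam ^ i * q t i / ∑ j ∈ Finset.range (k t + 1), lam ^ j * q t j)
    (hmean : ∑ t, ∑ i ∈ Finset.range (k t + 1), (i : ℝ) * dstar t i = m)
    (d : T → ℕ → ℝ)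
    (hdnonneg : ∀ t i, 0 ≤ d t i)
    (hdf : ∀ t, ∑ i ∈ Finset.range (k t + 1), d t i = f t)
    (hdm : ∑ t, ∑ i ∈ Finset.range (k t + 1), (i : ℝ) * d t i = m) :
    ∑ t, ∑ i ∈ Finset.range (k t + 1), dstar t i * Real.log (dstar t i / q t i) ≤
    ∑ t, ∑ i ∈ Finset.range (k t + 1), d t i * Real.log (d t i / q t i) :=
  stmt_8_general ω hω k f hf m q hq lam hlam dstar hdstar hmean d hdnonneg hdf hdm
end

section
/- Fix an integer k ≥ 1 and ω > 0. Define λ(m) for m ∈ (0,k) as the unique λ > 0 such that the distribution on {0,...,k} proportional to (λω)^i has mean m, and define λ'(m) analogously with threshold k+1 for m ∈ (0, k+1). Then for every m ∈ (0,k), λ'(m) < λ(m): raising the threshold while keeping the average money fixed strictly decreases the multiplier λ. -/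
/-!
Let `μₙ(x)` be the mean of the distribution on `{0, …, n}` proportional to `xⁱ`. Appending the
atom `n + 1` raises the mean, since `μₙ(x) ≤ n`. The mean is also monotone in `x`: by a weighted
Chebyshev argument, `μₙ(x) ≤ μₙ(y)` amounts to `∑ᵢ ∑ⱼ (i - j)(yⁱxʲ - yʲxⁱ) ≥ 0`, and every summand
is nonnegative. So `λ₁ ≤ λ₂` would give `μₖ(λ₁ω) < μₖ₊₁(λ₁ω) ≤ μₖ₊₁(λ₂ω)`, i.e. `m < m`.
-/

open Finset

theorem two_mul_sum_mul_sum_sub_sum_mul_sum {ι : Type*} (s : Finset ι) (v f g : ι → ℝ) :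
    2 * ((∑ i ∈ s, v i * f i) * ∑ j ∈ s, g j - (∑ i ∈ s, v i * g i) * ∑ j ∈ s, f j) =
      ∑ i ∈ s, ∑ j ∈ s, (v i - v j) * (f i * g j - f j * g i) := by
  simp only [mul_sub, sub_mul, sum_sub_distrib, sum_mul_sum]
  rw [sum_comm (f := fun i j => v j * (f j * g i)), sum_comm (f := fun i j => v j * (f i * g j))]
  simp only [mul_assoc, mul_comm (g _) (f _)]
  ring

theorem sum_mul_sum_le_sum_mul_sum_of_cross_nonneg {ι : Type*} {s : Finset ι} {v f g : ι → ℝ}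
    (h : ∀ i ∈ s, ∀ j ∈ s, 0 ≤ (v i - v j) * (f i * g j - f j * g i)) :
    (∑ i ∈ s, v i * g i) * ∑ j ∈ s, f j ≤ (∑ i ∈ s, v i * f i) * ∑ j ∈ s, g j := by
  have := two_mul_sum_mul_sum_sub_sum_mul_sum s v f g
  have : 0 ≤ ∑ i ∈ s, ∑ j ∈ s, (v i - v j) * (f i * g j - f j * g i) :=
    sum_nonneg fun i hi => sum_nonneg fun j hj => h i hi j hj
  linarith

theorem pow_mul_pow_le_pow_mul_pow {x y : ℝ} (hx : 0 ≤ x) (hxy : x ≤ y) {i j : ℕ} (hji : j ≤ i) :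
    x ^ i * y ^ j ≤ y ^ i * x ^ j := by
  have hy : 0 ≤ y := hx.trans hxy
  obtain ⟨d, rfl⟩ := Nat.exists_eq_add_of_le hji
  calc x ^ (j + d) * y ^ j = x ^ d * (x ^ j * y ^ j) := by ring
    _ ≤ y ^ d * (x ^ j * y ^ j) := by gcongr
    _ = y ^ (j + d) * x ^ j := by ring

theorem cast_sub_mul_pow_cross_nonneg {x y : ℝ} (hx : 0 ≤ x) (hxy : x ≤ y) (i j : ℕ) :
    0 ≤ ((i : ℝ) - j) * (y ^ i * x ^ j - y ^ j * x ^ i) := by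
  wlog hji : j ≤ i generalizing i j
  · have := this j i (by omega)
    linarith
  have : x ^ i * y ^ j ≤ y ^ i * x ^ j := pow_mul_pow_le_pow_mul_pow hx hxy hji
  have : (j : ℝ) ≤ i := by exact_mod_cast hji
  nlinarith

noncomputable def truncGeomMean (x : ℝ) (n : ℕ) : ℝ :=
  (∑ i ∈ range (n + 1), (i : ℝ) * x ^ i) / ∑ i ∈ range (n + 1), x ^ i

theorem truncGeomMean_le {x : ℝ} (hx : 0 < x) (n : ℕ) : truncGeomMean x n ≤ n := by
  rw [truncGeomMean, div_le_iff₀ (by positivity), mul_sum]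
  refine sum_le_sum fun i hi => ?_
  have : (i : ℝ) ≤ n := by exact_mod_cast Nat.lt_succ_iff.mp (mem_range.mp hi)
  gcongr

theorem truncGeomMean_lt_succ {x : ℝ} (hx : 0 < x) (n : ℕ) :
    truncGeomMean x n < truncGeomMean x (n + 1) := by
  have hmean := truncGeomMean_le hx n
  rw [truncGeomMean, div_le_iff₀ (by positivity)] at hmean
  rw [truncGeomMean, truncGeomMean, sum_range_succ _ (n + 1), sum_range_succ _ (n + 1),
    div_lt_div_iff₀ (by positivity) (by positivity)]
  have hS : 0 < ∑ i ∈ range (n + 1), x ^ i := by positivity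
  have hp : 0 < x ^ (n + 1) := by positivity
  push_cast
  nlinarith [mul_le_mul_of_nonneg_right hmean hp.le, mul_pos hS hp]

theorem truncGeomMean_le_truncGeomMean {x y : ℝ} (hx : 0 < x) (hxy : x ≤ y) (n : ℕ) :
    truncGeomMean x n ≤ truncGeomMean y n := by
  have hy : 0 < y := hx.trans_le hxy
  rw [truncGeomMean, truncGeomMean, div_le_div_iff₀ (by positivity) (by positivity)]
  exact sum_mul_sum_le_sum_mul_sum_of_cross_nonneg fun i _ j _ =>
    cast_sub_mul_pow_cross_nonneg hx.le hxy i j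

theorem stmt_11_general (ω : ℝ) (hω : 0 < ω) (k : ℕ)
    (m : ℝ)
    (M : ℝ → ℕ → ℝ)
    (hM : M = fun lam k => (∑ i ∈ Finset.range (k + 1), (i : ℝ) * (lam * ω) ^ i) /
      (∑ i ∈ Finset.range (k + 1), (lam * ω) ^ i))
    (lam₁ lam₂ : ℝ) (h₁ : 0 < lam₁)
    (hM₁ : M lam₁ k = m) (hM₂ : M lam₂ (k + 1) = m) :
    lam₂ < lam₁ := by
  subst hM
  by_contra! hle
  have hx₁ : 0 < lam₁ * ω := mul_pos h₁ hω
  have hlt : truncGeomMean (lam₁ * ω) k < truncGeomMean (lam₂ * ω) (k + 1) :=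
    (truncGeomMean_lt_succ hx₁ k).trans_le
      (truncGeomMean_le_truncGeomMean hx₁ (by gcongr) (k + 1))
  exact hlt.ne (hM₁.trans hM₂.symm)

/-- Raising the threshold from `k` to `k+1` while keeping the average money `m` fixed
strictly decreases the Lagrange multiplier: if `λ₁ > 0` makes the distribution on
`{0,...,k}` proportional to `(λ₁ω)^i` have mean `m ∈ (0,k)`, and `λ₂ > 0` makes the
distribution on `{0,...,k+1}` proportional to `(λ₂ω)^i` have mean `m`, then `λ₂ < λ₁`. -/
theorem stmt_11 (ω : ℝ) (hω : 0 < ω) (k : ℕ) (hk : 1 ≤ k)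
    (m : ℝ) (hm : m ∈ Set.Ioo (0 : ℝ) (k : ℝ))
    (M : ℝ → ℕ → ℝ)
    (hM : M = fun lam k => (∑ i ∈ Finset.range (k + 1), (i : ℝ) * (lam * ω) ^ i) /
      (∑ i ∈ Finset.range (k + 1), (lam * ω) ^ i))
    (lam₁ lam₂ : ℝ) (h₁ : 0 < lam₁) (h₂ : 0 < lam₂)
    (hM₁ : M lam₁ k = m) (hM₂ : M lam₂ (k + 1) = m) :
    lam₂ < lam₁ :=
  stmt_11_general ω hω k m M hM lam₁ lam₂ h₁ hM₁ hM₂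
end
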